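/- (Main duality theorem.) Let I, J, t : X → ℝ satisfy the haze formation model I(x) = t(x)·J(x) + 1 − t(x) for all x, and let Retinex be an operator on images that removes the illumination field from the inverted image, i.e. Retinex(t·(1 − J)) = 1 − J pixelwise. Then the haze-free image is recovered by applying Retinex to the inverted hazy image and inverting the result: J(x) = 1 − Retinex(1 − I)(x) for all x. -/
import Mathlib

/-- Main duality theorem: if `Retinex` factors out the illumination `t` from
the inverted image `t·(1-J)`, then the haze-free image is recovered as
`J = 1 - Retinex (1 - I)`. -/
theorem dehazing_eq_inverted_retinex {X : Type*} (I J t : X → ℝ)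
    (Retinex : (X → ℝ) → (X → ℝ))
    (hmodel : ∀ x, I x = t x * J x + 1 - t x)
    (hRet : ∀ x, Retinex (fun y => t y * (1 - J y)) x = 1 - J x) :
    ∀ x, J x = 1 - Retinex (fun y => 1 - I y) x := by
  intro x
  have h : (fun y => 1 - I y) = (fun y => t y * (1 - J y)) := by
    funext y; rw [hmodel y]; ring
  rw [h, hRet]; ring
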